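/- For every natural number n > 1, S(n)/n ≥ log(n/2)/log 3, where log denotes the natural logarithm (on the real numbers). -/

import Mathlib

/-- The height function: H(1) = 0 and H(n) = H(φ(n)) + 1 for n ≥ 2. -/
def H : ℕ → ℕ
  | 0 => 0
  | 1 => 0
  | n + 2 => H (Nat.totient (n + 2)) + 1
  decreasing_by exact Nat.totient_lt _ (by omega)

/-- The sum-of-heights function S(n) = ∑_{k=1}^n H(k). -/
def S (n : ℕ) : ℕ := ∑ k ∈ Finset.Icc 1 n, H k

/-!
Doubling turns `H` into Shapiro's function `shapiro n = H (2n) - 1`, which is completely additive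
and satisfies `shapiro p = shapiro ((p - 1) / 2) + 1` at odd primes `p`. Induction over prime
factors then gives `n ≤ 3 ^ shapiro n`, hence `log₃ (n / 2) + 1 ≤ H n` for `n ≥ 2`. Summing these
bounds works because the increments of `n log₃ (n / 2)` exceed `log₃ ((n + 1) / 2)` by at most
`n log (1 + 1 / n) / log 3 ≤ 1`.
-/

open Real
open scoped Nat

lemma H_one : H 1 = 0 := by rw [H]

lemma H_eq_H_totient_add_one {n : ℕ} (hn : 2 ≤ n) : H n = H (φ n) + 1 := by
  obtain ⟨m, rfl⟩ := Nat.exists_eq_add_of_le' hn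
  rw [H]

/-- Shapiro's completely additive function; for `n ≥ 1` it equals `H (2 * n) - 1`. -/
def shapiro (n : ℕ) : ℕ := H (φ (2 * n))

lemma shapiro_one : shapiro 1 = 0 := by
  rw [shapiro, Nat.totient_two, H_one]

lemma H_two_mul {n : ℕ} (hn : 1 ≤ n) : H (2 * n) = shapiro n + 1 :=
  H_eq_H_totient_add_one (by omega)

lemma H_of_odd {n : ℕ} (hn : Odd n) (h1 : 1 < n) : H n = shapiro n + 1 := by
  rw [shapiro, Nat.totient_two_mul_of_odd hn, H_eq_H_totient_add_one h1]

lemma H_of_even {n : ℕ} (hn : Even n) : H n = shapiro n := by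
  induction n using Nat.strong_induction_on with
  | _ n ih =>
  obtain rfl | rfl | h2 : n = 0 ∨ n = 2 ∨ 2 < n := by grind
  · rfl
  · rw [shapiro, show φ (2 * 2) = 2 by decide]
  rw [shapiro, Nat.totient_two_mul_of_even hn, H_eq_H_totient_add_one h2.le,
    ih _ (Nat.totient_lt n (by omega)) (Nat.totient_even h2),
    H_two_mul (Nat.totient_pos.2 (by omega))]

lemma shapiro_two_mul {n : ℕ} (hn : 1 ≤ n) : shapiro (2 * n) = shapiro n + 1 := by
  rw [← H_of_even (even_two_mul n), H_two_mul hn]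

lemma shapiro_prime {p : ℕ} (hp : p.Prime) : shapiro p = shapiro (p / 2) + 1 := by
  rcases hp.eq_two_or_odd' with rfl | hodd
  · simpa using shapiro_two_mul le_rfl
  have hp2 : 2 * (p / 2) = p - 1 := by grind
  rw [shapiro, Nat.totient_two_mul_of_odd hodd, Nat.totient_prime hp, ← hp2,
    H_of_even (even_two_mul _), shapiro_two_mul]
  have := hp.two_le
  omega

lemma shapiro_prime_mul {p n : ℕ} (hp : p.Prime) (hn : 1 ≤ n)
    (hmul : ∀ a b, 1 ≤ a → 1 ≤ b → a * b < p * n → shapiro (a * b) = shapiro a + shapiro b) :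
    shapiro (p * n) = shapiro p + shapiro n := by
  rcases hn.eq_or_lt with rfl | hn
  · rw [mul_one, shapiro_one, add_zero]
  rcases hp.eq_two_or_odd' with rfl | hodd
  · rw [shapiro_two_mul (by omega), shapiro_prime Nat.prime_two, shapiro_one]
    omega
  obtain ⟨t, ht⟩ := Nat.totient_even (by omega : 2 < 2 * n)
  rw [← two_mul] at ht
  have ht1 : 1 ≤ t := by have := Nat.totient_pos.2 (by omega : 0 < 2 * n); omega
  have htn : t < n := by have := Nat.totient_lt (2 * n) (by omega); omega
  have hsn : shapiro n = shapiro t + 1 := by rw [shapiro, ht, H_two_mul ht1]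
  -- `φ (p * 2n)` is `p φ (2n)` or `(p - 1) φ (2n)`: twice a product smaller than `p * n`
  rw [shapiro, mul_left_comm]
  by_cases hdvd : p ∣ n
  · rw [Nat.totient_mul_of_prime_of_dvd hp (dvd_mul_of_dvd_right hdvd 2), ht, mul_left_comm,
      H_two_mul (Nat.mul_pos hp.pos ht1),
      hmul p t hp.one_le ht1 (Nat.mul_lt_mul_of_pos_left htn hp.pos), hsn, add_assoc]
  · have hdvd' : ¬p ∣ 2 * n := by
      rw [hp.dvd_mul, Nat.prime_dvd_prime_iff_eq hp Nat.prime_two]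
      grind
    have hq : 2 * (p / 2) = p - 1 := by grind
    have hq1 : 1 ≤ p / 2 := by have := hp.two_le; omega
    have hlt : p / 2 * (2 * t) < p * n :=
      calc p / 2 * (2 * t) = 2 * (p / 2) * t := by ring
        _ < p * n := by rw [hq]; exact Nat.mul_lt_mul'' (by omega) htn
    rw [Nat.totient_mul_of_prime_of_not_dvd hp hdvd', ← hq, ht, mul_assoc,
      H_two_mul (Nat.mul_pos hq1 (by omega)), hmul _ _ hq1 (by omega) hlt,
      shapiro_prime hp, shapiro_two_mul ht1, hsn]
    ring

lemma shapiro_mul {m n : ℕ} (hm : 1 ≤ m) (hn : 1 ≤ n) :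
    shapiro (m * n) = shapiro m + shapiro n := by
  induction hN : m * n using Nat.strong_induction_on generalizing m n with
  | _ N ih =>
  subst hN
  rcases hm.eq_or_lt with rfl | hm
  · rw [one_mul, shapiro_one, zero_add]
  rcases hn.eq_or_lt with rfl | hn
  · rw [mul_one, shapiro_one, add_zero]
  have ih' : ∀ a b, 1 ≤ a → 1 ≤ b → a * b < m * n → shapiro (a * b) = shapiro a + shapiro b :=
    fun a b ha hb hab => ih _ hab ha hb rfl
  obtain ⟨p, hp, k, rfl⟩ := Nat.exists_prime_and_dvd (show m ≠ 1 by omega)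
  have hk : 1 ≤ k := Nat.pos_of_mul_pos_left (by omega : 0 < p * k)
  rw [mul_assoc] at ih' ⊢
  rw [shapiro_prime_mul hp (Nat.mul_pos hk (by omega)) ih',
    ih' k n hk (by omega) (lt_mul_left (by positivity) hp.one_lt),
    ih' p k hp.one_le hk (Nat.mul_lt_mul_of_pos_left (lt_mul_right hk hn) hp.pos), add_assoc]

lemma le_three_pow_shapiro {n : ℕ} (hn : 1 ≤ n) : n ≤ 3 ^ shapiro n := by
  induction n using Nat.strong_induction_on with
  | _ n ih =>
  rcases hn.eq_or_lt with rfl | hn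
  · rw [shapiro_one]; rfl
  by_cases hp : n.Prime
  · have hq : 1 ≤ n / 2 := by omega
    have := ih (n / 2) (by omega) hq
    rw [shapiro_prime hp, pow_succ]
    omega
  · obtain ⟨a, b, ha, hb, rfl⟩ := (Nat.not_prime_iff_exists_mul_eq hn).1 hp
    have ha1 : 1 ≤ a := Nat.pos_of_mul_pos_right (by omega : 0 < a * b)
    have hb1 : 1 ≤ b := Nat.pos_of_mul_pos_left (by omega : 0 < a * b)
    rw [shapiro_mul ha1 hb1, pow_add]
    exact Nat.mul_le_mul (ih a ha ha1) (ih b hb hb1)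

lemma three_mul_le_two_mul_three_pow_H {n : ℕ} (hn : 2 ≤ n) : 3 * n ≤ 2 * 3 ^ H n := by
  rcases Nat.even_or_odd' n with ⟨m, rfl | rfl⟩
  · have := le_three_pow_shapiro (show 1 ≤ m by omega)
    rw [H_two_mul (by omega), pow_succ]
    omega
  · have := le_three_pow_shapiro (show 1 ≤ 2 * m + 1 by omega)
    rw [H_of_odd (odd_two_mul_add_one m) hn, pow_succ]
    omega

lemma logb_three_add_one_le_H {n : ℕ} (hn : 2 ≤ n) : logb 3 (n / 2) + 1 ≤ H n := by
  have hcast : (3 : ℝ) * n ≤ 2 * 3 ^ H n := by exact_mod_cast three_mul_le_two_mul_three_pow_H hn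
  have hpow : (3 : ℝ) ^ ((H n : ℝ) - 1) = 3 ^ H n / 3 := by
    rw [Real.rpow_sub (by norm_num), Real.rpow_one, Real.rpow_natCast]
  have : logb 3 (n / 2) ≤ (H n : ℝ) - 1 := by
    rw [Real.logb_le_iff_le_rpow (by norm_num) (by positivity), hpow]
    linarith
  linarith

lemma mul_logb_add_one_sub_logb_le_one {b x : ℝ} (hb : 1 ≤ log b) (hx : 0 < x) :
    x * (logb b (x + 1) - logb b x) ≤ 1 := by
  have hlog : log ((x + 1) / x) ≤ 1 / x :=
    calc log ((x + 1) / x) ≤ (x + 1) / x - 1 := Real.log_le_sub_one_of_pos (by positivity)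
      _ = 1 / x := by field_simp; ring
  rw [← Real.logb_div (by positivity) hx.ne', Real.logb, mul_div_assoc', div_le_one (by linarith)]
  calc x * log ((x + 1) / x) ≤ x * (1 / x) := by gcongr
    _ = 1 := mul_one_div_cancel hx.ne'
    _ ≤ log b := hb

lemma one_le_log_three : 1 ≤ log 3 := by
  rw [Real.le_log_iff_exp_le (by norm_num)]
  exact Real.exp_one_lt_three.le

lemma S_succ (n : ℕ) : S (n + 1) = S n + H (n + 1) :=
  Finset.sum_Icc_succ_top (by omega) H

lemma mul_logb_three_le_S (n : ℕ) : n * logb 3 (n / 2) ≤ S n := by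
  induction n with
  | zero => simp [S]
  | succ n ih =>
  rcases Nat.eq_zero_or_pos n with rfl | hn
  · have : logb 3 (1 / 2) ≤ 0 := Real.logb_nonpos (by norm_num) (by norm_num) (by norm_num)
    simpa [S, H_one] using this
  have hdrift := mul_logb_add_one_sub_logb_le_one one_le_log_three (Nat.cast_pos.2 hn)
  have hH := logb_three_add_one_le_H (show 2 ≤ n + 1 by omega)
  rw [S_succ]
  push_cast at hH ⊢
  rw [Real.logb_div (by positivity) (by norm_num)] at ih hH ⊢
  linarith

theorem sum_heights_lower_bound (n : ℕ) (hn : 1 < n) :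
    Real.log ((n : ℝ) / 2) / Real.log 3 ≤ (S n : ℝ) / (n : ℝ) := by
  rw [le_div_iff₀ (Nat.cast_pos.2 (by omega)), mul_comm]
  exact mul_logb_three_le_S n
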